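/- arXiv:1803.00709 — 3 statements merged into one kernel-verified Lean document; each statement's English description precedes it below -/
import Mathlib

section
/- Let Q be a commutative nontrivial ZDF involutive quantale, X a set, and x ∈ X. For every commutative von Neumann unital *-subsemialgebra A of Hom(X,X), the set J_x(A) = {f ∈ A | f(x,y) = 0 for all y ∈ X} is a prime k*-ideal of A, and J_x(A) = A ∩ J_x(B) whenever A ⊆ B; hence x determines a global section of the prime spectrum over X. -/
open Classical

noncomputable section

universe u v

/-- A commutative involutive quantale: a complete lattice with a commutative
monoid operation distributing over arbitrary joins, together with a
join-preserving involution compatible with multiplication and unit. -/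
structure CommInvQuantale (Q : Type u) [CompleteLattice Q] : Type u where
  mul : Q → Q → Q
  one : Q
  mul_comm : ∀ a b : Q, mul a b = mul b a
  mul_assoc : ∀ a b c : Q, mul (mul a b) c = mul a (mul b c)
  one_mul : ∀ a : Q, mul one a = a
  mul_sSup : ∀ (a : Q) (S : Set Q), mul a (sSup S) = ⨆ y ∈ S, mul a y
  inv : Q → Q
  inv_inv : ∀ a : Q, inv (inv a) = a
  inv_sSup : ∀ S : Set Q, inv (sSup S) = ⨆ y ∈ S, inv y
  inv_mul : ∀ a b : Q, inv (mul a b) = mul (inv a) (inv b)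
  inv_one : inv one = one

namespace CommInvQuantale

variable {Q : Type u} [CompleteLattice Q] {X : Type v}

/-- Zero-divisor free: `x·y = 0` implies `x = 0` or `y = 0` (where `0 = ⊥`). -/
def ZDF (Qd : CommInvQuantale Q) : Prop :=
  ∀ a b : Q, Qd.mul a b = ⊥ → a = ⊥ ∨ b = ⊥

/-- Nontrivial: `1 ≠ 0`. -/
def NontrivialQ (Qd : CommInvQuantale Q) : Prop := Qd.one ≠ (⊥ : Q)

/-- The zero `Q`-relation. -/
def qzero : X → X → Q := fun _ _ => (⊥ : Q)

/-- The support of a `Q`-relation. -/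
def supp (f : X → X → Q) : Set X := {x | ∃ y, f x y ≠ (⊥ : Q)}

/-- The cosupport of a `Q`-relation. -/
def cosupp (f : X → X → Q) : Set X := {x | ∃ y, f y x ≠ (⊥ : Q)}

/-- The kernel of a character of `A`. -/
def kerChar (A : Set (X → X → Q)) (ρ : (X → X → Q) → Q) : Set (X → X → Q) :=
  {f ∈ A | ρ f = (⊥ : Q)}

/-- The map `w : Q → 2` sending `0` to `0` and every nonzero element to `1`
(with `2` modelled by `Bool`). -/
def wmap : Q → Bool := fun q => if q = (⊥ : Q) then false else true

/-- The kernel of a homomorphism `γ : A → 2` (with `2` modelled by `Bool`). -/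
def kerTwo (A : Set (X → X → Q)) (γ : (X → X → Q) → Bool) : Set (X → X → Q) :=
  {f ∈ A | γ f = false}

variable (Qd : CommInvQuantale Q)

/-- Composition of `Q`-relations: `(f ∘ g)(x,z) = ⋁_y g(x,y) · f(y,z)`,
so `qcomp Qd f g` is "`f` after `g`". -/
def qcomp (f g : X → X → Q) : X → X → Q := fun x z => ⨆ y : X, Qd.mul (g x y) (f y z)

/-- The identity `Q`-relation. -/
def qid : X → X → Q := fun x y => if x = y then Qd.one else ⊥

/-- The dagger of a `Q`-relation: `f†(x,y) = f(y,x)*`. -/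
def qdag (f : X → X → Q) : X → X → Q := fun x y => Qd.inv (f y x)

/-- Scalar multiplication of a `Q`-relation: `(q•f)(x,y) = q·f(x,y)`. -/
def qsmul (q : Q) (f : X → X → Q) : X → X → Q := fun x y => Qd.mul q (f x y)

/-- A commutative unital *-subsemialgebra of `Hom(X,X)`: contains the zero and
identity relations, closed under pointwise binary join, composition, scalar
multiplication and dagger, and composition is commutative on it. -/
structure IsSubalg (A : Set (X → X → Q)) : Prop where
  zero_mem : qzero ∈ A
  id_mem : Qd.qid ∈ A
  sup_mem : ∀ f ∈ A, ∀ g ∈ A, f ⊔ g ∈ A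
  comp_mem : ∀ f ∈ A, ∀ g ∈ A, Qd.qcomp f g ∈ A
  smul_mem : ∀ (q : Q), ∀ f ∈ A, Qd.qsmul q f ∈ A
  dag_mem : ∀ f ∈ A, Qd.qdag f ∈ A
  comp_comm : ∀ f ∈ A, ∀ g ∈ A, Qd.qcomp f g = Qd.qcomp g f

/-- The commutant of a set of `Q`-relations. -/
def commutant (B : Set (X → X → Q)) : Set (X → X → Q) :=
  { f | ∀ g ∈ B, Qd.qcomp f g = Qd.qcomp g f }

/-- A commutative von Neumann unital *-subsemialgebra: a commutative unital
*-subsemialgebra equal to its double commutant. -/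
def IsVN (A : Set (X → X → Q)) : Prop :=
  Qd.IsSubalg A ∧ Qd.commutant (Qd.commutant A) = A

/-- A character of `A`: a map `ρ : Hom(X,X) → Q` with `ρ(0) = 0`, `ρ(id) = 1`,
preserving binary joins, composition and dagger on `A`. -/
structure IsChar (A : Set (X → X → Q)) (ρ : (X → X → Q) → Q) : Prop where
  map_zero : ρ qzero = (⊥ : Q)
  map_id : ρ Qd.qid = Qd.one
  map_sup : ∀ f ∈ A, ∀ g ∈ A, ρ (f ⊔ g) = ρ f ⊔ ρ g
  map_comp : ∀ f ∈ A, ∀ g ∈ A, ρ (Qd.qcomp f g) = Qd.mul (ρ f) (ρ g)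
  map_dag : ∀ f ∈ A, ρ (Qd.qdag f) = Qd.inv (ρ f)

/-- An ideal of `A`. -/
structure IsIdeal (A J : Set (X → X → Q)) : Prop where
  subset : J ⊆ A
  zero_mem : qzero ∈ J
  sup_mem : ∀ a ∈ J, ∀ b ∈ J, a ⊔ b ∈ J
  absorb : ∀ f ∈ A, ∀ a ∈ J, Qd.qcomp f a ∈ J

/-- A prime k*-ideal of `A`: a proper prime ideal which is a k-ideal closed
under dagger. -/
structure IsPrimeKStarIdeal (A J : Set (X → X → Q)) : Prop where
  ideal : Qd.IsIdeal A J
  proper : J ≠ A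
  prime : ∀ f ∈ A, ∀ g ∈ A, Qd.qcomp f g ∈ J → f ∈ J ∨ g ∈ J
  kideal : ∀ a ∈ J, ∀ b ∈ A, a ⊔ b ∈ J → b ∈ J
  dag_mem : ∀ a ∈ J, Qd.qdag a ∈ J

/-- A global section of the Gelfand spectrum over `X`: an assignment of a
character to every commutative von Neumann unital *-subsemialgebra of
`Hom(X,X)`, compatible with restriction along inclusions. -/
def IsGelfandGlobalSection (ρ : Set (X → X → Q) → (X → X → Q) → Q) : Prop :=
  (∀ A : Set (X → X → Q), Qd.IsVN A → Qd.IsChar A (ρ A)) ∧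
  (∀ A B : Set (X → X → Q), Qd.IsVN A → Qd.IsVN B → A ⊆ B → ∀ f ∈ A, ρ A f = ρ B f)

/-- A global section of the prime spectrum over `X`: an assignment of a prime
k*-ideal to every commutative von Neumann unital *-subsemialgebra of
`Hom(X,X)`, compatible with restriction along inclusions. -/
def IsPrimeGlobalSection (χ : Set (X → X → Q) → Set (X → X → Q)) : Prop :=
  (∀ A : Set (X → X → Q), Qd.IsVN A → Qd.IsPrimeKStarIdeal A (χ A)) ∧
  (∀ A B : Set (X → X → Q), Qd.IsVN A → Qd.IsVN B → A ⊆ B → χ A = A ∩ χ B)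

/-- An idempotent element of `A`. -/
def IsIdem (A : Set (X → X → Q)) (p : X → X → Q) : Prop :=
  p ∈ A ∧ Qd.qcomp p p = p

/-- A subunital idempotent of `A`: an idempotent with an orthogonal idempotent
complement summing to the identity. -/
def IsSubunital (A : Set (X → X → Q)) (p : X → X → Q) : Prop :=
  Qd.IsIdem A p ∧ ∃ q, Qd.IsIdem A q ∧ Qd.qcomp p q = qzero ∧ p ⊔ q = Qd.qid

/-- A primitive subunital idempotent of `A`. -/
def IsPrimitive (A : Set (X → X → Q)) (p : X → X → Q) : Prop :=
  Qd.IsSubunital A p ∧ p ≠ qzero ∧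
    ¬ ∃ s t, Qd.IsSubunital A s ∧ s ≠ qzero ∧ Qd.IsSubunital A t ∧ t ≠ qzero ∧
      Qd.qcomp s t = qzero ∧ s ⊔ t = p

/-- The unique quantale map `! : 2 → Q` (with `2` modelled by `Bool`). -/
def bang : Bool → Q := fun b => if b then Qd.one else ⊥

/-- A homomorphism `γ : A → 2` (with `2` the two-element quantale, modelled by
`Bool` with join `||` and multiplication `&&`, trivial involution). -/
structure IsTwoHom (A : Set (X → X → Q)) (γ : (X → X → Q) → Bool) : Prop where
  map_zero : γ qzero = false
  map_id : γ Qd.qid = true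
  map_sup : ∀ f ∈ A, ∀ g ∈ A, γ (f ⊔ g) = (γ f || γ g)
  map_comp : ∀ f ∈ A, ∀ g ∈ A, γ (Qd.qcomp f g) = (γ f && γ g)
  map_dag : ∀ f ∈ A, γ (Qd.qdag f) = γ f

/-- The Gelfand spectrum of `A`: the set of characters of `A`. -/
def SpecG (A : Set (X → X → Q)) : Type (max u v) :=
  {ρ : (X → X → Q) → Q // Qd.IsChar A ρ}

/-- The prime spectrum of `A`: the set of prime k*-ideals of `A`. -/
def SpecP (A : Set (X → X → Q)) : Type (max u v) :=
  {J : Set (X → X → Q) // Qd.IsPrimeKStarIdeal A J}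

/-- The Zariski topology on the Gelfand spectrum, with basic closed sets
`V_G(J) = {ρ | J ⊆ ker ρ}` for ideals `J` of `A`. -/
def zariskiG (A : Set (X → X → Q)) : TopologicalSpace (Qd.SpecG A) :=
  TopologicalSpace.generateFrom
    {U | ∃ J : Set (X → X → Q), Qd.IsIdeal A J ∧
      U = {ρ : Qd.SpecG A | J ⊆ kerChar A ρ.1}ᶜ}

/-- The Zariski topology on the prime spectrum, with basic closed sets
`V_P(J) = {K | J ⊆ K}` for ideals `J` of `A`. -/
def zariskiP (A : Set (X → X → Q)) : TopologicalSpace (Qd.SpecP A) :=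
  TopologicalSpace.generateFrom
    {U | ∃ J : Set (X → X → Q), Qd.IsIdeal A J ∧
      U = {K : Qd.SpecP A | J ⊆ K.1}ᶜ}

section Aux

variable (Qd : CommInvQuantale Q)

lemma aux_mul_bot (a : Q) : Qd.mul a ⊥ = ⊥ := by
  have := Qd.mul_sSup a ∅
  simpa using this

lemma aux_bot_mul (a : Q) : Qd.mul ⊥ a = ⊥ := by
  rw [Qd.mul_comm]; exact aux_mul_bot Qd a

lemma aux_inv_bot : Qd.inv (⊥ : Q) = ⊥ := by
  have := Qd.inv_sSup ∅
  simpa using this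

lemma aux_mul_iSup {ι : Sort*} (a : Q) (f : ι → Q) :
    Qd.mul a (⨆ i, f i) = ⨆ i, Qd.mul a (f i) := by
  rw [iSup, Qd.mul_sSup, iSup_range]

lemma aux_mul_ne_bot (h : Qd.ZDF) {a b : Q} (ha : a ≠ ⊥) (hb : b ≠ ⊥) :
    Qd.mul a b ≠ ⊥ := fun hc => by
  rcases h a b hc with h' | h'
  · exact ha h'
  · exact hb h'

lemma aux_inv_ne_bot {a : Q} (ha : a ≠ ⊥) : Qd.inv a ≠ ⊥ := fun hc =>
  ha (by rw [← Qd.inv_inv a, hc, aux_inv_bot])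

lemma aux_row_bot_comp {Y : Type v} (h a : Y → Y → Q) (x : Y)
    (ha : ∀ y, a x y = ⊥) : ∀ z, (Qd.qcomp h a) x z = ⊥ := by
  intro z
  refine le_bot_iff.mp (iSup_le fun y => ?_)
  rw [ha y, aux_bot_mul]

lemma aux_qcomp_assoc {Y : Type v} (a b c : Y → Y → Q) :
    Qd.qcomp (Qd.qcomp a b) c = Qd.qcomp a (Qd.qcomp b c) := by
  funext x w
  show (⨆ z, Qd.mul (c x z) (⨆ y, Qd.mul (b z y) (a y w)))
      = ⨆ y, Qd.mul (⨆ z, Qd.mul (c x z) (b z y)) (a y w)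
  calc (⨆ z, Qd.mul (c x z) (⨆ y, Qd.mul (b z y) (a y w)))
      = ⨆ z, ⨆ y, Qd.mul (c x z) (Qd.mul (b z y) (a y w)) := by
        refine iSup_congr fun z => ?_
        rw [aux_mul_iSup]
    _ = ⨆ y, ⨆ z, Qd.mul (Qd.mul (c x z) (b z y)) (a y w) := by
        rw [iSup_comm]
        exact iSup_congr fun y => iSup_congr fun z => (Qd.mul_assoc _ _ _).symm
    _ = ⨆ y, Qd.mul (⨆ z, Qd.mul (c x z) (b z y)) (a y w) := by
        refine iSup_congr fun y => ?_
        rw [Qd.mul_comm _ (a y w), aux_mul_iSup]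
        exact iSup_congr fun z => Qd.mul_comm _ _

end Aux

/-- For every commutative von Neumann unital *-subsemialgebra `A`
of `Hom(X,X)`, the set `J_x(A) = {f ∈ A | f(x,y) = 0 for all y}` is a prime
k*-ideal of `A`, and `J_x(A) = A ∩ J_x(B)` whenever `A ⊆ B`; hence `x`
determines a global section of the prime spectrum over `X`. -/
theorem element_determines_prime_global_section
    (Qd : CommInvQuantale Q) (hZDF : Qd.ZDF) (hNT : Qd.NontrivialQ)
    (X : Type v) (x : X) :
    (∀ A : Set (X → X → Q), Qd.IsVN A →
        Qd.IsPrimeKStarIdeal A {f ∈ A | ∀ y : X, f x y = (⊥ : Q)}) ∧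
    (∀ A B : Set (X → X → Q), Qd.IsVN A → Qd.IsVN B → A ⊆ B →
        {f ∈ A | ∀ y : X, f x y = (⊥ : Q)} =
          A ∩ {f ∈ B | ∀ y : X, f x y = (⊥ : Q)}) ∧
    Qd.IsPrimeGlobalSection
      (fun A : Set (X → X → Q) => {f ∈ A | ∀ y : X, f x y = (⊥ : Q)}) := by
  have key : ∀ A : Set (X → X → Q), Qd.IsVN A →
      Qd.IsPrimeKStarIdeal A {f ∈ A | ∀ y : X, f x y = (⊥ : Q)} := by
    intro A hA
    obtain ⟨hS, -⟩ := hA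
    refine ⟨⟨fun f hf => hf.1, ⟨hS.zero_mem, fun y => rfl⟩, ?_, ?_⟩, ?_, ?_, ?_, ?_⟩
    · -- sup closed
      intro a ha b hb
      refine ⟨hS.sup_mem a ha.1 b hb.1, fun y => ?_⟩
      have : (a ⊔ b) x y = a x y ⊔ b x y := rfl
      rw [this, ha.2 y, hb.2 y, sup_idem]
    · -- absorb
      intro f hf a ha
      exact ⟨hS.comp_mem f hf a ha.1, aux_row_bot_comp Qd f a x ha.2⟩
    · -- proper
      intro h
      have hid : Qd.qid ∈ {f ∈ A | ∀ y : X, f x y = (⊥ : Q)} := h.symm ▸ hS.id_mem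
      have := hid.2 x
      rw [show Qd.qid x x = Qd.one from if_pos rfl] at this
      exact hNT this
    · -- prime
      intro f hf g hg h0
      by_contra hcon
      push_neg at hcon
      obtain ⟨hfJ, hgJ⟩ := hcon
      have hfr : ∃ y0, f x y0 ≠ ⊥ := by
        by_contra h'; push_neg at h'; exact hfJ ⟨hf, h'⟩
      have hgr : ∃ z0, g x z0 ≠ ⊥ := by
        by_contra h'; push_neg at h'; exact hgJ ⟨hg, h'⟩
      obtain ⟨y0, hy0⟩ := hfr
      obtain ⟨z0, hz0⟩ := hgr
      have hdgA : Qd.qdag g ∈ A := hS.dag_mem g hg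
      -- rearrange (df∘f) ∘ (dg∘g)
      have e1 : Qd.qcomp (Qd.qcomp (Qd.qdag f) f) (Qd.qcomp (Qd.qdag g) g)
          = Qd.qcomp (Qd.qdag f) (Qd.qcomp f (Qd.qcomp (Qd.qdag g) g)) :=
        aux_qcomp_assoc Qd _ _ _
      have e2 : Qd.qcomp f (Qd.qcomp (Qd.qdag g) g)
          = Qd.qcomp (Qd.qcomp f (Qd.qdag g)) g := (aux_qcomp_assoc Qd _ _ _).symm
      have e3 : Qd.qcomp f (Qd.qdag g) = Qd.qcomp (Qd.qdag g) f :=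
        hS.comp_comm f hf (Qd.qdag g) hdgA
      have e4 : Qd.qcomp (Qd.qcomp (Qd.qdag g) f) g
          = Qd.qcomp (Qd.qdag g) (Qd.qcomp f g) := aux_qcomp_assoc Qd _ _ _
      have hre : Qd.qcomp (Qd.qcomp (Qd.qdag f) f) (Qd.qcomp (Qd.qdag g) g)
          = Qd.qcomp (Qd.qdag f) (Qd.qcomp (Qd.qdag g) (Qd.qcomp f g)) := by
        rw [e1, e2, e3, e4]
      -- row at x of the composite is ⊥
      have hrow : (Qd.qcomp (Qd.qcomp (Qd.qdag f) f) (Qd.qcomp (Qd.qdag g) g)) x x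
          = ⊥ := by
        rw [hre]
        exact aux_row_bot_comp Qd (Qd.qdag f) _ x
          (aux_row_bot_comp Qd (Qd.qdag g) (Qd.qcomp f g) x h0.2) x
      -- but the diagonal values are nonzero
      have hFx : Qd.qcomp (Qd.qdag f) f x x ≠ ⊥ := by
        intro hc
        have hle : Qd.mul (f x y0) (Qd.qdag f y0 x)
            ≤ ⨆ y, Qd.mul (f x y) (Qd.qdag f y x) :=
          le_iSup (fun y => Qd.mul (f x y) (Qd.qdag f y x)) y0
        have heq : (⨆ y, Qd.mul (f x y) (Qd.qdag f y x))
            = Qd.qcomp (Qd.qdag f) f x x := rfl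
        rw [heq, hc, le_bot_iff] at hle
        exact aux_mul_ne_bot Qd hZDF hy0 (aux_inv_ne_bot Qd hy0) hle
      have hGx : Qd.qcomp (Qd.qdag g) g x x ≠ ⊥ := by
        intro hc
        have hle : Qd.mul (g x z0) (Qd.qdag g z0 x)
            ≤ ⨆ y, Qd.mul (g x y) (Qd.qdag g y x) :=
          le_iSup (fun y => Qd.mul (g x y) (Qd.qdag g y x)) z0
        have heq : (⨆ y, Qd.mul (g x y) (Qd.qdag g y x))
            = Qd.qcomp (Qd.qdag g) g x x := rfl
        rw [heq, hc, le_bot_iff] at hle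
        exact aux_mul_ne_bot Qd hZDF hz0 (aux_inv_ne_bot Qd hz0) hle
      have hterm : Qd.mul (Qd.qcomp (Qd.qdag g) g x x) (Qd.qcomp (Qd.qdag f) f x x)
          ≤ ⨆ y, Qd.mul (Qd.qcomp (Qd.qdag g) g x y) (Qd.qcomp (Qd.qdag f) f y x) :=
        le_iSup (fun y => Qd.mul (Qd.qcomp (Qd.qdag g) g x y)
          (Qd.qcomp (Qd.qdag f) f y x)) x
      have heq2 : (⨆ y, Qd.mul (Qd.qcomp (Qd.qdag g) g x y)
            (Qd.qcomp (Qd.qdag f) f y x))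
          = (Qd.qcomp (Qd.qcomp (Qd.qdag f) f) (Qd.qcomp (Qd.qdag g) g)) x x := rfl
      rw [heq2, hrow, le_bot_iff] at hterm
      exact aux_mul_ne_bot Qd hZDF hGx hFx hterm
    · -- k-ideal
      intro a ha b hb hab
      refine ⟨hb, fun y => ?_⟩
      have h1 : (a ⊔ b) x y = ⊥ := hab.2 y
      have h2 : b x y ≤ (a ⊔ b) x y := le_sup_right
      rw [h1, le_bot_iff] at h2
      exact h2
    · -- dagger closed
      intro a ha
      refine ⟨hS.dag_mem a ha.1, fun y => ?_⟩
      have hcc := hS.comp_comm a ha.1 (Qd.qdag a) (hS.dag_mem a ha.1)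
      have hR : (Qd.qcomp (Qd.qdag a) a) x x = ⊥ := by
        refine le_bot_iff.mp (iSup_le fun y' => ?_)
        rw [show a x y' = ⊥ from ha.2 y', aux_bot_mul]
      have hL : (Qd.qcomp a (Qd.qdag a)) x x = ⊥ := by rw [hcc.symm] at hR; exact hR
      have hcol : a y x = ⊥ := by
        have hterm : Qd.mul (Qd.qdag a x y) (a y x)
            ≤ ⨆ y', Qd.mul (Qd.qdag a x y') (a y' x) :=
          le_iSup (fun y' => Qd.mul (Qd.qdag a x y') (a y' x)) y
        have heq : (⨆ y', Qd.mul (Qd.qdag a x y') (a y' x))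
            = (Qd.qcomp a (Qd.qdag a)) x x := rfl
        rw [heq, hL, le_bot_iff] at hterm
        rcases hZDF _ _ hterm with h' | h'
        · have : Qd.inv (a y x) = ⊥ := h'
          rw [← Qd.inv_inv (a y x), this, aux_inv_bot]
        · exact h'
      show Qd.inv (a y x) = ⊥
      rw [hcol, aux_inv_bot]
  have restr : ∀ A B : Set (X → X → Q), A ⊆ B →
      {f ∈ A | ∀ y : X, f x y = (⊥ : Q)} =
        A ∩ {f ∈ B | ∀ y : X, f x y = (⊥ : Q)} := by
    intro A B hAB
    ext f
    constructor
    · rintro ⟨hfA, hfr⟩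
      exact ⟨hfA, hAB hfA, hfr⟩
    · rintro ⟨hfA, -, hfr⟩
      exact ⟨hfA, hfr⟩
  exact ⟨key, fun A B _ _ hAB => restr A B hAB,
    key, fun A B _ _ hAB => restr A B hAB⟩

end CommInvQuantale
end
end

section
/- Let Q be a commutative involutive quantale, X a set, and A a commutative von Neumann unital *-subsemialgebra of Hom(X,X). Then A is closed under arbitrary joins: for every subset B ⊆ A, the pointwise join ⋁B (the Q-relation (x,y) ↦ ⋁_{f∈B} f(x,y)) belongs to A; hence A is a subquantale of Hom(X,X). -/
open Classical

noncomputable section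

universe u v

namespace CommInvQuantale

variable {Q : Type u} [CompleteLattice Q] {X : Type v}

variable (Qd : CommInvQuantale Q)

theorem mul_iSup' (Qd : CommInvQuantale Q) {ι : Sort*} (a : Q) (h : ι → Q) :
    Qd.mul a (⨆ i, h i) = ⨆ i, Qd.mul a (h i) := by
  rw [iSup, Qd.mul_sSup, iSup_range]

/-- A commutative von Neumann unital *-subsemialgebra `A` of
`Hom(X,X)` is closed under arbitrary pointwise joins; hence `A` is a
subquantale of `Hom(X,X)`. -/
theorem vn_subalgebra_closed_under_arbitrary_joins
    (Qd : CommInvQuantale Q) (X : Type v)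
    (A : Set (X → X → Q)) (hA : Qd.IsVN A) :
    ∀ B ⊆ A, (fun x y : X => ⨆ f ∈ B, f x y) ∈ A := by
  intro B hB
  rw [← hA.2]
  intro g hg
  funext x z
  have key : ∀ f : X → X → Q,
      Qd.qcomp f g x z = ⨆ y : X, Qd.mul (g x y) (f y z) := fun _ => rfl
  show (⨆ y : X, Qd.mul (g x y) (⨆ f ∈ B, f y z)) =
      ⨆ y : X, Qd.mul ((⨆ f ∈ B, f x y)) (g y z)
  have lhs : (⨆ y : X, Qd.mul (g x y) (⨆ f ∈ B, f y z)) =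
      ⨆ f ∈ B, Qd.qcomp f g x z := by
    simp only [mul_iSup', key]
    exact iSup_comm.trans (by exact iSup_congr fun f => iSup_comm)
  have rhs : (⨆ y : X, Qd.mul ((⨆ f ∈ B, f x y)) (g y z)) =
      ⨆ f ∈ B, Qd.qcomp g f x z := by
    have key2 : ∀ f : X → X → Q,
        Qd.qcomp g f x z = ⨆ y : X, Qd.mul (g y z) (f x y) := fun f => by
      show (⨆ y : X, Qd.mul (f x y) (g y z)) = _
      exact iSup_congr fun y => Qd.mul_comm _ _
    simp only [Qd.mul_comm _ (g _ z), mul_iSup', key2]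
    exact iSup_comm.trans (iSup_congr fun f => iSup_comm)
  rw [lhs, rhs]
  exact iSup_congr fun f => iSup_congr fun hf => by
    rw [hg f (hB hf)]

end CommInvQuantale
end
end

section
/- Let Q be a commutative involutive quantale and X a set. The set E = {q•id_X | q ∈ Q} of scalar multiples of the identity relation is a commutative von Neumann unital *-subsemialgebra of Hom(X,X); in particular E'' = E. -/
open Classical

noncomputable section

universe u v

namespace CommInvQuantale

variable {Q : Type u} [CompleteLattice Q] {X : Type v}

variable (Qd : CommInvQuantale Q)

lemma mul_bot (Qd : CommInvQuantale Q) (a : Q) : Qd.mul a ⊥ = ⊥ := by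
  have h := Qd.mul_sSup a ∅
  simpa using h

lemma bot_mul (Qd : CommInvQuantale Q) (a : Q) : Qd.mul ⊥ a = ⊥ := by
  rw [Qd.mul_comm]; exact Qd.mul_bot a

lemma inv_bot (Qd : CommInvQuantale Q) : Qd.inv (⊥ : Q) = ⊥ := by
  have h := Qd.inv_sSup (∅ : Set Q)
  simpa using h

lemma mul_one' (Qd : CommInvQuantale Q) (a : Q) : Qd.mul a Qd.one = a := by
  rw [Qd.mul_comm]; exact Qd.one_mul a

lemma iSup_eq_single {ι : Type v} (t : ι → Q) (y₀ : ι)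
    (h : ∀ y, y ≠ y₀ → t y = ⊥) : (⨆ y, t y) = t y₀ := by
  apply le_antisymm
  · apply iSup_le
    intro y
    by_cases hy : y = y₀
    · subst hy; exact le_rfl
    · rw [h y hy]; exact bot_le
  · exact le_iSup t y₀

lemma qcomp_smul_id_right (Qd : CommInvQuantale Q) {X : Type v}
    (f : X → X → Q) (q : Q) :
    Qd.qcomp f (Qd.qsmul q Qd.qid) = Qd.qsmul q f := by
  funext x z
  unfold qcomp qsmul qid
  rw [iSup_eq_single _ x]
  · simp [Qd.mul_one']
  · intro y hy
    simp [Ne.symm hy, Qd.mul_bot, Qd.bot_mul]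

lemma qcomp_smul_id_left (Qd : CommInvQuantale Q) {X : Type v}
    (f : X → X → Q) (q : Q) :
    Qd.qcomp (Qd.qsmul q Qd.qid) f = Qd.qsmul q f := by
  funext x z
  unfold qcomp qsmul qid
  rw [iSup_eq_single _ z]
  · simp [Qd.mul_one', Qd.mul_comm (f x z) q]
  · intro y hy
    simp [hy, Qd.mul_bot]

/-- The set `E = {q • id_X | q ∈ Q}` of scalar multiples of the
identity relation is a commutative von Neumann unital *-subsemialgebra of
`Hom(X,X)`; in particular `E'' = E`. -/
theorem trivial_algebra_is_von_neumann
    (Qd : CommInvQuantale Q) (X : Type v) :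
    Qd.IsVN {g : X → X → Q | ∃ q : Q, g = Qd.qsmul q Qd.qid} := by
  set E : Set (X → X → Q) := {g : X → X → Q | ∃ q : Q, g = Qd.qsmul q Qd.qid} with hE
  -- every element of E commutes with everything
  have central : ∀ q : Q, ∀ f : X → X → Q,
      Qd.qcomp f (Qd.qsmul q Qd.qid) = Qd.qcomp (Qd.qsmul q Qd.qid) f := by
    intro q f
    rw [Qd.qcomp_smul_id_right, Qd.qcomp_smul_id_left]
  -- anything commuting with all test relations e_{a,b} lies in E
  have center_sub : ∀ f : X → X → Q,
      (∀ g : X → X → Q, Qd.qcomp f g = Qd.qcomp g f) → f ∈ E := by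
    intro f hf
    rcases isEmpty_or_nonempty X with hX | hX
    · exact ⟨⊥, funext fun x => hX.elim x⟩
    · obtain ⟨x₀⟩ := hX
      have key : ∀ a b z : X, f b z = if z = b then f a a else ⊥ := by
        intro a b z
        have e : X → X → Q := fun x y => if x = a ∧ y = b then Qd.one else ⊥
        have h := congrFun (congrFun (hf (fun x y => if x = a ∧ y = b then Qd.one else ⊥)) a) z
        unfold qcomp at h
        rw [iSup_eq_single _ b (by
          intro y hy
          simp only [hy, and_false, if_false]
          exact Qd.bot_mul _)] at h
        rw [iSup_eq_single _ a (by
          intro y hy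
          simp only [hy, false_and, if_false]
          exact Qd.mul_bot _)] at h
        simp only [and_self, if_true, true_and] at h
        rw [Qd.one_mul] at h
        rw [h]
        by_cases hz : z = b
        · simp [hz, Qd.mul_one']
        · simp [hz, Qd.mul_bot]
      refine ⟨f x₀ x₀, funext fun x => funext fun y => ?_⟩
      unfold qsmul qid
      rw [key x₀ x y]
      by_cases hxy : x = y
      · subst hxy; simp [Qd.mul_one']
      · simp [Ne.symm hxy, hxy, Qd.mul_bot]
  constructor
  · constructor
    · exact ⟨⊥, funext fun x => funext fun y => by
        unfold qzero qsmul; rw [Qd.bot_mul]⟩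
    · exact ⟨Qd.one, funext fun x => funext fun y => by
        unfold qsmul qid
        by_cases h : x = y <;> simp [h, Qd.one_mul, Qd.mul_bot]⟩
    · rintro f ⟨q, rfl⟩ g ⟨r, rfl⟩
      refine ⟨q ⊔ r, funext fun x => funext fun y => ?_⟩
      have : Qd.mul (q ⊔ r) (Qd.qid x y) = Qd.mul q (Qd.qid x y) ⊔ Qd.mul r (Qd.qid x y) := by
        rw [Qd.mul_comm (q ⊔ r), Qd.mul_comm q, Qd.mul_comm r]
        have h := Qd.mul_sSup (Qd.qid x y) {q, r}
        simpa [sSup_pair, iSup_or, iSup_sup_eq] using h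
      simpa [qsmul] using this.symm
    · rintro f ⟨q, rfl⟩ g ⟨r, rfl⟩
      refine ⟨Qd.mul r q, ?_⟩
      rw [Qd.qcomp_smul_id_right]
      funext x y
      unfold qsmul
      rw [Qd.mul_assoc]
    · rintro r f ⟨q, rfl⟩
      refine ⟨Qd.mul r q, funext fun x => funext fun y => ?_⟩
      unfold qsmul
      rw [Qd.mul_assoc]
    · rintro f ⟨q, rfl⟩
      refine ⟨Qd.inv q, funext fun x => funext fun y => ?_⟩
      unfold qdag qsmul qid
      rw [Qd.inv_mul]
      by_cases h : x = y
      · simp [h, Qd.inv_one]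
      · simp [h, Ne.symm h, Qd.inv_bot, Qd.mul_bot]
    · rintro f ⟨q, rfl⟩ g ⟨r, rfl⟩
      exact central r _
  · apply Set.Subset.antisymm
    · intro f hf
      apply center_sub
      intro g
      exact hf g (fun h hh => by obtain ⟨q, hq⟩ := hh; subst hq; exact central q g)
    · rintro f ⟨q, rfl⟩ g _
      exact (central q g).symm

end CommInvQuantale
end
end
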